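/- arXiv:2210.03241 — 9 statements merged into one kernel-verified Lean document; each statement's English description precedes it below -/
import Mathlib

section
/- Let 𝒮 be an n×n sign pattern and α ⊆ {1,…,n}. Then there exists a matrix W in the sign pattern class Q(𝒮) such that α is stable for W if and only if for every row index i ∈ {1,…,n} there exists a column j ∈ α with 𝒮_{ij} = (s_α)_i (that is, 𝒮_{ij} = 1 if i ∈ α and 𝒮_{ij} = −1 if i ∉ α). -/
open Finset

/-- Signature of a set: `+1` on `α`, `-1` off `α`. -/
def sgn {n : ℕ} (α : Finset (Fin n)) (i : Fin n) : ℝ := if i ∈ α then 1 else -1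

/-- `α` is a stable set for the weight matrix `W`. -/
def IsStable {n : ℕ} (W : Matrix (Fin n) (Fin n) ℝ) (α : Finset (Fin n)) : Prop :=
  ∀ i, 0 < sgn α i * ∑ j ∈ α, W i j

/-- `S` is a sign pattern: all entries in `{-1,0,1}`. -/
def IsSignPattern {n : ℕ} (S : Matrix (Fin n) (Fin n) ℝ) : Prop :=
  ∀ i j, S i j = -1 ∨ S i j = 0 ∨ S i j = 1

/-- `W` belongs to the sign pattern class `Q(S)`. -/
def InSignClass {n : ℕ} (W S : Matrix (Fin n) (Fin n) ℝ) : Prop :=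
  ∃ Wp : Matrix (Fin n) (Fin n) ℝ, (∀ i j, 0 < Wp i j) ∧ ∀ i j, W i j = Wp i j * S i j

/-- A set `α` is allowed to be stable by the sign pattern `S` iff each row `i`
has an entry in a column `j ∈ α` with sign `(s_α)_i`. -/
theorem stmt0 (n : ℕ) (S : Matrix (Fin n) (Fin n) ℝ) (hS : IsSignPattern S)
    (α : Finset (Fin n)) :
    (∃ W : Matrix (Fin n) (Fin n) ℝ, InSignClass W S ∧ IsStable W α) ↔
      ∀ i : Fin n, ∃ j ∈ α, S i j = sgn α i := by

  constructor
  · rintro ⟨W, ⟨Wp, hWp, hW⟩, hstab⟩ i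
    by_contra h
    push_neg at h
    have hst := hstab i
    have hle : sgn α i * ∑ j ∈ α, W i j ≤ 0 := by
      rw [Finset.mul_sum]
      apply Finset.sum_nonpos
      intro j hj
      rw [hW]
      have hSj := hS i j
      have hne := h j hj
      have hsgn : sgn α i = 1 ∨ sgn α i = -1 := by unfold sgn; split <;> simp
      have hkey : sgn α i * S i j ≤ 0 := by
        rcases hsgn with h1 | h1 <;> rcases hSj with h2|h2|h2 <;>
          simp [h1, h2] at hne ⊢
      nlinarith [hWp i j]
    linarith
  · intro h
    choose c hc hcS using h
    set ε : ℝ := 1/(2*(n+1)) with hε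
    have hεpos : 0 < ε := by positivity
    refine ⟨fun i j => (if j = c i then 1 else ε) * S i j,
      ⟨fun i j => if j = c i then 1 else ε,
        fun i j => by dsimp only; split <;> [norm_num; exact hεpos],
        fun i j => rfl⟩, ?_⟩
    intro i
    have hsq : sgn α i * sgn α i = 1 := by unfold sgn; split <;> norm_num
    rw [Finset.mul_sum, ← Finset.add_sum_erase _ _ (hc i)]
    have hmain : sgn α i * ((if c i = c i then 1 else ε) * S i (c i)) = 1 := by
      rw [if_pos rfl, hcS i]; linarith [hsq]
    rw [hmain]
    have hbound : ∀ j ∈ α.erase (c i),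
        -ε ≤ sgn α i * ((if j = c i then 1 else ε) * S i j) := by
      intro j hj
      rw [if_neg (Finset.ne_of_mem_erase hj)]
      have hsgn : sgn α i = 1 ∨ sgn α i = -1 := by unfold sgn; split <;> simp
      rcases hS i j with h2|h2|h2 <;> rcases hsgn with h1|h1 <;>
        rw [h1, h2] <;> nlinarith
    have hsum : -((n:ℝ)*ε) ≤ ∑ j ∈ α.erase (c i),
        sgn α i * ((if j = c i then 1 else ε) * S i j) := by
      calc -((n:ℝ)*ε) ≤ (α.erase (c i)).card • (-ε) := by
              rw [nsmul_eq_mul]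
              have hcard : ((α.erase (c i)).card : ℝ) ≤ n := by
                exact_mod_cast Nat.le_trans
                  (Finset.card_le_card (Finset.erase_subset _ _))
                  (by simpa using Finset.card_le_univ α)
              nlinarith
        _ ≤ _ := Finset.card_nsmul_le_sum _ _ _ hbound
    have hlt1 : (n:ℝ)*ε < 1 := by
      have h2 : (0:ℝ) < 2*((n:ℝ)+1) := by positivity
      have h0 : (0:ℝ) ≤ (n:ℝ) := Nat.cast_nonneg n
      rw [hε, mul_one_div, div_lt_one h2]
      linarith
    linarith
end

section
/- Let 𝒮 be an n×n sign pattern and let (α_t)_{t∈I} be a finite family of pairwise disjoint subsets of {1,…,n}. Then there exists a matrix W in the sign pattern class Q(𝒮) such that every α_t is simultaneously stable for W if and only if for every row index i ∈ {1,…,n} and every t ∈ I there exists j ∈ α_t with 𝒮_{ij} = (s_{α_t})_i (that is, 𝒮_{ij} = 1 if i ∈ α_t and 𝒮_{ij} = −1 if i ∉ α_t). -/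
open Finset

lemma sgn_cases {n : ℕ} (α : Finset (Fin n)) (i : Fin n) : sgn α i = 1 ∨ sgn α i = -1 := by
  unfold sgn; split <;> simp

lemma sgn_sq {n : ℕ} (α : Finset (Fin n)) (i : Fin n) : sgn α i * sgn α i = 1 := by
  rcases sgn_cases α i with h | h <;> rw [h] <;> norm_num

/-- A finite family of pairwise disjoint sets is allowed to be simultaneously stable
by the sign pattern `S` iff for each row `i` and each member `A t` there is an entry
in a column `j ∈ A t` with sign `(s_{A t})_i`. -/
theorem stmt3 (n : ℕ) (S : Matrix (Fin n) (Fin n) ℝ) (hS : IsSignPattern S)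
    (ι : Type) [Fintype ι] (A : ι → Finset (Fin n))
    (hdisj : ∀ s t : ι, s ≠ t → Disjoint (A s) (A t)) :
    (∃ W : Matrix (Fin n) (Fin n) ℝ, InSignClass W S ∧ ∀ t : ι, IsStable W (A t)) ↔
      ∀ (i : Fin n) (t : ι), ∃ j ∈ A t, S i j = sgn (A t) i := by
  classical
  constructor
  · rintro ⟨W, ⟨Wp, hWp, hW⟩, hst⟩ i t
    by_contra h
    push_neg at h
    have hsum := hst t i
    rw [Finset.mul_sum] at hsum
    have hle : ∀ j ∈ A t, sgn (A t) i * W i j ≤ 0 := by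
      intro j hj
      rw [hW]
      have hne := h j hj
      have hss : sgn (A t) i * S i j ≤ 0 := by
        rcases sgn_cases (A t) i with h1 | h1 <;>
          rcases hS i j with h2 | h2 | h2 <;>
            rw [h1, h2] <;> rw [h1] at hne <;> simp_all <;> norm_num
      calc sgn (A t) i * (Wp i j * S i j) = Wp i j * (sgn (A t) i * S i j) := by ring
        _ ≤ 0 := mul_nonpos_of_nonneg_of_nonpos (hWp i j).le hss
    linarith [Finset.sum_nonpos hle]
  · intro h
    set Wp : Matrix (Fin n) (Fin n) ℝ := fun i j =>
      if ∃ t, j ∈ A t ∧ S i j = sgn (A t) i then (n + 1 : ℝ) else 1 / (n + 1) with hWpdef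
    refine ⟨fun i j => Wp i j * S i j, ⟨Wp, ?_, fun i j => rfl⟩, ?_⟩
    · intro i j
      simp only [hWpdef]
      split <;> positivity
    · intro t i
      obtain ⟨j0, hj0, hSj0⟩ := h i t
      have key : ∀ j ∈ A t, Wp i j =
          if S i j = sgn (A t) i then (n + 1 : ℝ) else 1 / (n + 1) := by
        intro j hj
        simp only [hWpdef]
        by_cases hc : S i j = sgn (A t) i
        · rw [if_pos hc, if_pos ⟨t, hj, hc⟩]
        · rw [if_neg hc, if_neg]
          rintro ⟨t', hjt', hc'⟩
          have ht' : t' = t := by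
            by_contra hne
            exact Finset.disjoint_left.mp (hdisj t' t hne) hjt' hj
          rw [ht'] at hc'
          exact hc hc'
      show 0 < sgn (A t) i * ∑ j ∈ A t, Wp i j * S i j
      rw [Finset.mul_sum, ← Finset.add_sum_erase _ _ hj0]
      have hterm0 : sgn (A t) i * (Wp i j0 * S i j0) = (n + 1 : ℝ) := by
        rw [key j0 hj0, if_pos hSj0, hSj0]
        rw [mul_comm, mul_assoc, sgn_sq, mul_one]
      rw [hterm0]
      have hbound : ∀ j ∈ (A t).erase j0, -(1 / (n + 1) : ℝ) ≤ sgn (A t) i * (Wp i j * S i j) := by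
        intro j hj
        have hjA := Finset.mem_of_mem_erase hj
        rw [key j hjA]
        by_cases hc : S i j = sgn (A t) i
        · rw [if_pos hc, hc, mul_comm, mul_assoc, sgn_sq, mul_one]
          have h0 : (0 : ℝ) < 1 / (n + 1) := by positivity
          have h1 : (0 : ℝ) ≤ (n : ℝ) + 1 := by positivity
          linarith
        · rw [if_neg hc]
          have h0 : (0 : ℝ) < 1 / (n + 1) := by positivity
          rcases sgn_cases (A t) i with h1 | h1 <;>
            rcases hS i j with h2 | h2 | h2 <;> rw [h1, h2] <;> linarith
      have hsum := Finset.card_nsmul_le_sum ((A t).erase j0)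
        (fun j => sgn (A t) i * (Wp i j * S i j)) (-(1 / (n + 1) : ℝ)) hbound
      rw [nsmul_eq_mul] at hsum
      have hcard : ((A t).erase j0).card ≤ n := by
        calc ((A t).erase j0).card ≤ (A t).card := Finset.card_erase_le
          _ ≤ (Finset.univ : Finset (Fin n)).card := Finset.card_le_card (Finset.subset_univ _)
          _ = n := by simp
      have hcardR : (((A t).erase j0).card : ℝ) ≤ (n : ℝ) := by exact_mod_cast hcard
      have h0 : (0 : ℝ) < 1 / (n + 1) := by positivity
      have hfrac : (n : ℝ) * (1 / (n + 1)) < 1 := by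
        rw [mul_one_div, div_lt_one (by positivity)]
        linarith
      nlinarith [hsum, hcardR, h0, hfrac]
end

section
/- Let (α_t)_{t∈I} be a finite family of pairwise disjoint subsets of {1,…,n} with |α_t| = k_t and |I| = N, and suppose every α_t is stable for the n×n real matrix W. Then the number of pairs (i,j) with w_{ij} > 0 is at least Σ_{t∈I} k_t, and the number of pairs (i,j) with w_{ij} < 0 is at least n·N − Σ_{t∈I} k_t. -/
/-! Stability of `α` forces, in every row `i`, an entry of the columns `α` whose sign is that of
`sgn α i`: a positive one for `i ∈ α`, a negative one for `i ∉ α`. So the columns `α_t` carry at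
least `k_t` positive and `n - k_t` negative entries, and disjoint families of columns add up. -/

open Finset

namespace IsStable

variable {n : ℕ} {W : Matrix (Fin n) (Fin n) ℝ} {α : Finset (Fin n)} {i : Fin n}

theorem exists_pos_of_mem (hα : IsStable W α) (hi : i ∈ α) : ∃ j ∈ α, 0 < W i j := by
  have h := hα i
  rw [sgn, if_pos hi, one_mul] at h
  simpa using exists_lt_of_sum_lt (f := fun _ => (0 : ℝ)) (by simpa using h)

theorem exists_neg_of_notMem (hα : IsStable W α) (hi : i ∉ α) : ∃ j ∈ α, W i j < 0 := by
  have h := hα i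
  rw [sgn, if_neg hi, neg_one_mul, neg_pos] at h
  simpa using exists_lt_of_sum_lt (g := fun _ => (0 : ℝ)) (by simpa using h)

end IsStable

theorem Finset.card_le_card_of_forall_exists_prod_mem {α β : Type*} {s : Finset α}
    {F : Finset (α × β)} (h : ∀ i ∈ s, ∃ j, (i, j) ∈ F) : #s ≤ #F :=
  card_le_card_of_surjOn Prod.fst fun i hi =>
    let ⟨j, hj⟩ := h i hi
    ⟨(i, j), hj, rfl⟩

theorem Finset.sum_card_filter_mem_le {α β ι : Type*} [Fintype ι] [DecidableEq α]
    [DecidableEq β] (s : Finset α) (g : α → β) (A : ι → Finset β)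
    (hA : Pairwise fun s t => Disjoint (A s) (A t)) :
    ∑ t, #{x ∈ s | g x ∈ A t} ≤ #s := by
  have hdisj : (↑(univ : Finset ι) : Set ι).PairwiseDisjoint fun t => {x ∈ s | g x ∈ A t} :=
    fun _ _ _ _ htu => disjoint_filter.2 fun _ _ h => disjoint_left.1 (hA htu) h
  rw [← card_biUnion hdisj]
  exact card_le_card (biUnion_subset.2 fun _ _ => filter_subset _ _)

/-- If a mutually disjoint family of sets of sizes `k_t` is stable for `W`, then the
number of positive entries of `W` is at least `Σ_t k_t` and the number of negative
entries is at least `n·|I| - Σ_t k_t`. -/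
theorem stmt4 (n : ℕ) (W : Matrix (Fin n) (Fin n) ℝ)
    (ι : Type) [Fintype ι] (A : ι → Finset (Fin n))
    (hdisj : ∀ s t : ι, s ≠ t → Disjoint (A s) (A t))
    (hstab : ∀ t : ι, IsStable W (A t)) :
    (∑ t : ι, (A t).card) ≤
        ((Finset.univ : Finset (Fin n × Fin n)).filter fun p => 0 < W p.1 p.2).card ∧
    n * Fintype.card ι - (∑ t : ι, (A t).card) ≤
        ((Finset.univ : Finset (Fin n × Fin n)).filter fun p => W p.1 p.2 < 0).card := by
  set Pos := (univ : Finset (Fin n × Fin n)).filter fun p => 0 < W p.1 p.2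
  set Neg := (univ : Finset (Fin n × Fin n)).filter fun p => W p.1 p.2 < 0
  have hA : Pairwise fun s t => Disjoint (A s) (A t) := hdisj
  have hpos (t : ι) : #(A t) ≤ #{p ∈ Pos | p.2 ∈ A t} :=
    card_le_card_of_forall_exists_prod_mem fun i hi => by
      obtain ⟨j, hj, hWij⟩ := (hstab t).exists_pos_of_mem hi
      exact ⟨j, by simp [Pos, hj, hWij]⟩
  have hneg (t : ι) : n - #(A t) ≤ #{p ∈ Neg | p.2 ∈ A t} := by
    rw [show n - #(A t) = #(A t)ᶜ by rw [card_compl, Fintype.card_fin]]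
    refine card_le_card_of_forall_exists_prod_mem fun i hi => ?_
    obtain ⟨j, hj, hWij⟩ := (hstab t).exists_neg_of_notMem (mem_compl.1 hi)
    exact ⟨j, by simp [Neg, hj, hWij]⟩
  refine ⟨(sum_le_sum fun t _ => hpos t).trans (sum_card_filter_mem_le Pos Prod.snd A hA), ?_⟩
  calc n * Fintype.card ι - ∑ t, #(A t) = ∑ t, (n - #(A t)) := by
        rw [sum_tsub_distrib _ fun t _ => (card_le_univ (A t)).trans_eq (Fintype.card_fin n),
          sum_const, card_univ, smul_eq_mul, mul_comm]
    _ ≤ ∑ t, #{p ∈ Neg | p.2 ∈ A t} := sum_le_sum fun t _ => hneg t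
    _ ≤ #Neg := sum_card_filter_mem_le Neg Prod.snd A hA
end

section
/- Let α_1 ⊊ α_2 ⊊ … ⊊ α_N be a nested family of subsets of {1,…,n} with |α_t| = k_t, and fix a row index i ∈ {1,…,n}. Then the number of vectors v ∈ {−1,0,1}^n satisfying (a) there exists j ∈ α_1 with v_j = (s_{α_1})_i, and (b) for every t ∈ {2,…,N} such that i ∈ α_t \ α_{t−1}, there exists j ∈ α_t with v_j = 1, equals 3^n · (1 − (2/3)^{k_1} − Σ_{t=2}^{N} (1 − 2^{−k_1}) · (2/3)^{k_t} · [i ∈ α_t \ α_{t−1}]), where [·] is 1 if the condition holds and 0 otherwise. -/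
/-!
Since the family is nested, `i ∈ A (t+1) \ A t` holds for at most one `t`, so at most one
constraint of type (b) is active and the sum has at most one nonzero term. Everything then reduces
to counting by complements: forbidding one value on `k` coordinates leaves `2^k 3^(n-k)`
signatures, and when constraint (b) is active for `C = A (t+1)` we have `i ∉ A 0 ⊆ C`, so
inclusion–exclusion over "some `-1` on `A 0`" and "some `1` on `C`" finishes the count, the
doubly forbidden signatures numbering `2^(|C| - |A 0|) 3^(n - |C|)`.
-/

open Finset

theorem prod_ite_mem_ite_mem {ι M : Type*} [Fintype ι] [DecidableEq ι] [CommMonoid M]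
    {B C : Finset ι} (hBC : B ⊆ C) (x y z : M) :
    ∏ j, (if j ∈ B then x else if j ∈ C then y else z)
      = x ^ #B * y ^ (#C - #B) * z ^ (Fintype.card ι - #C) := by
  have hnest : ∀ j, (if j ∈ B then x else if j ∈ C then y else z)
      = if j ∈ C then (if j ∈ B then x else y) else z := by
    intro j
    by_cases hB : j ∈ B
    · simp [hB, hBC hB]
    · simp [hB]
  simp only [hnest, prod_ite, filter_mem_eq_inter, filter_not, univ_inter, inter_eq_right.2 hBC,
    prod_const, card_sdiff_of_subset hBC, card_sdiff_of_subset (subset_univ C), card_univ]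

section Counting

variable {ι α : Type*} [Fintype ι] [DecidableEq ι] [Fintype α] [DecidableEq α]

theorem card_filter_forall_mem (S : ι → Finset α) :
    #{v : ι → α | ∀ j, v j ∈ S j} = ∏ j, #(S j) := by
  rw [← Fintype.card_piFinset]
  congr 1
  ext v
  simp [Fintype.mem_piFinset]

theorem card_filter_forall_ne_and_forall_ne {B C : Finset ι} (hBC : B ⊆ C) (a b : α) :
    #{v : ι → α | (∀ j ∈ B, v j ≠ a) ∧ ∀ j ∈ C, v j ≠ b}
      = #({a, b}ᶜ : Finset α) ^ #B * (Fintype.card α - 1) ^ (#C - #B)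
          * Fintype.card α ^ (Fintype.card ι - #C) := by
  set S : ι → Finset α := fun j =>
    if j ∈ B then {a, b}ᶜ else if j ∈ C then {b}ᶜ else univ
  have hS : ∀ v : ι → α,
      ((∀ j ∈ B, v j ≠ a) ∧ ∀ j ∈ C, v j ≠ b) ↔ ∀ j, v j ∈ S j := by
    refine fun v => forall_and.symm.trans (forall_congr' fun j => ?_)
    by_cases hjB : j ∈ B
    · simp [S, hjB, hBC hjB]
    · by_cases hjC : j ∈ C <;> simp [S, hjB, hjC]
  rw [filter_congr fun v _ => hS v, card_filter_forall_mem, ← prod_ite_mem_ite_mem hBC]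
  refine prod_congr rfl fun j _ => ?_
  by_cases hjB : j ∈ B
  · simp [S, hjB]
  · by_cases hjC : j ∈ C <;> simp [S, hjB, hjC, card_compl]

theorem card_filter_forall_ne (C : Finset ι) (b : α) :
    #{v : ι → α | ∀ j ∈ C, v j ≠ b}
      = (Fintype.card α - 1) ^ #C * Fintype.card α ^ (Fintype.card ι - #C) := by
  simpa using card_filter_forall_ne_and_forall_ne (empty_subset C) b b

end Counting

theorem card_filter_and_add_card_filter_not_add_card_filter_not {α : Type*} [DecidableEq α]
    (s : Finset α) (p q : α → Prop) [DecidablePred p] [DecidablePred q] :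
    #{x ∈ s | p x ∧ q x} + #{x ∈ s | ¬p x} + #{x ∈ s | ¬q x}
      = #s + #{x ∈ s | ¬p x ∧ ¬q x} := by
  rw [add_assoc, ← card_union_add_card_inter, filter_union_right, ← filter_and,
    ← card_filter_add_card_filter_not (s := s) (fun x => p x ∧ q x), add_assoc]
  simp only [not_and_or]

theorem SignType.card_eq_three : Fintype.card SignType = 3 := rfl

section SignType

variable {ι : Type*} [Fintype ι] [DecidableEq ι]

theorem card_signType_filter_forall_ne (B : Finset ι) (s : SignType) :
    (#{v : ι → SignType | ∀ j ∈ B, v j ≠ s} : ℝ)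
      = 3 ^ Fintype.card ι * (2 / 3) ^ #B := by
  rw [card_filter_forall_ne, SignType.card_eq_three]
  push_cast
  rw [pow_sub₀ _ three_ne_zero (card_le_univ B), div_pow]
  field_simp

theorem card_signType_filter_forall_ne_neg_one_and_forall_ne_one {B C : Finset ι} (hBC : B ⊆ C) :
    (#{v : ι → SignType | (∀ j ∈ B, v j ≠ -1) ∧ ∀ j ∈ C, v j ≠ 1} : ℝ)
      = 3 ^ Fintype.card ι * (2 ^ #B)⁻¹ * (2 / 3) ^ #C := by
  rw [card_filter_forall_ne_and_forall_ne hBC, SignType.card_eq_three,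
    show #({-1, 1}ᶜ : Finset SignType) = 1 from rfl]
  push_cast
  rw [pow_sub₀ _ two_ne_zero (card_le_card hBC), pow_sub₀ _ three_ne_zero (card_le_univ C),
    div_pow]
  field_simp
  norm_num

theorem card_signType_filter_exists_eq (B : Finset ι) (s : SignType) :
    (#{v : ι → SignType | ∃ j ∈ B, v j = s} : ℝ)
      = 3 ^ Fintype.card ι * (1 - (2 / 3) ^ #B) := by
  have hsplit :=
    card_filter_add_card_filter_not (s := univ) fun v : ι → SignType => ∃ j ∈ B, v j = s
  simp only [not_exists, not_and, ← ne_eq] at hsplit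
  rw [card_univ, Fintype.card_fun, SignType.card_eq_three] at hsplit
  have := congrArg (Nat.cast : ℕ → ℝ) hsplit
  push_cast at this
  rw [card_signType_filter_forall_ne] at this
  linear_combination this

theorem card_signType_filter_exists_neg_one_and_exists_one {B C : Finset ι} (hBC : B ⊆ C) :
    (#{v : ι → SignType | (∃ j ∈ B, v j = -1) ∧ ∃ j ∈ C, v j = 1} : ℝ)
      = 3 ^ Fintype.card ι * (1 - (2 / 3) ^ #B - (1 - (2 ^ #B)⁻¹) * (2 / 3) ^ #C) := by
  have hincl := card_filter_and_add_card_filter_not_add_card_filter_not univ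
    (fun v : ι → SignType => ∃ j ∈ B, v j = -1) (fun v => ∃ j ∈ C, v j = 1)
  simp only [not_exists, not_and, ← ne_eq] at hincl
  rw [card_univ, Fintype.card_fun, SignType.card_eq_three] at hincl
  have := congrArg (Nat.cast : ℕ → ℝ) hincl
  push_cast at this
  rw [card_signType_filter_forall_ne, card_signType_filter_forall_ne,
    card_signType_filter_forall_ne_neg_one_and_forall_ne_one hBC] at this
  linear_combination this

end SignType

theorem Monotone.eq_of_mem_succ_sdiff_castSucc {α : Type*} [DecidableEq α] {N : ℕ}
    {A : Fin (N + 1) → Finset α} (hA : Monotone A) {x : α} {s t : Fin N}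
    (hs : x ∈ A s.succ \ A s.castSucc) (ht : x ∈ A t.succ \ A t.castSucc) : s = t := by
  by_contra hne
  wlog hlt : s < t generalizing s t
  · exact this ht hs (Ne.symm hne) (lt_of_le_of_ne (not_lt.1 hlt) (Ne.symm hne))
  exact (mem_sdiff.1 ht).2 (hA (Fin.succ_le_castSucc_iff.2 hlt) (mem_sdiff.1 hs).1)

/-- For a strictly nested family `A 0 ⊊ … ⊊ A N` with sizes `k_t = |A t|` and a fixed
row index `i`, the number of signatures `v ∈ {-1,0,1}^n` satisfying
(a) `∃ j ∈ A 0, v j = (s_{A 0})_i` and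
(b) for every `t` with `i ∈ A (t+1) \ A t` there is `j ∈ A (t+1)` with `v j = 1`,
equals `3^n (1 - (2/3)^(k_0) - Σ_t (1 - 2^(-k_0)) (2/3)^(k_(t+1)) [i ∈ A (t+1) \ A t])`. -/
theorem stmt8 (n N : ℕ) (A : Fin (N + 1) → Finset (Fin n)) (hA : StrictMono A)
    (i : Fin n) :
    (((Finset.univ : Finset (Fin n → SignType)).filter fun v =>
        (∃ j ∈ A 0, v j = (if i ∈ A 0 then (1 : SignType) else -1)) ∧
        ∀ t : Fin N, i ∈ A t.succ \ A t.castSucc → ∃ j ∈ A t.succ, v j = 1).card : ℝ)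
      = 3 ^ n * (1 - ((2 : ℝ) / 3) ^ (A 0).card -
          ∑ t : Fin N,
            (if i ∈ A t.succ \ A t.castSucc then
              (1 - ((2 : ℝ) ^ (A 0).card)⁻¹) * ((2 : ℝ) / 3) ^ (A t.succ).card
            else 0)) := by
  by_cases hex : ∃ t₀ : Fin N, i ∈ A t₀.succ \ A t₀.castSucc
  · obtain ⟨t₀, ht₀⟩ := hex
    have huniq : ∀ t, i ∈ A t.succ \ A t.castSucc ↔ t = t₀ := fun t =>
      ⟨fun ht => hA.monotone.eq_of_mem_succ_sdiff_castSucc ht ht₀, fun h => h ▸ ht₀⟩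
    have hi : i ∉ A 0 := fun hi => (mem_sdiff.1 ht₀).2 (hA.monotone (Fin.zero_le _) hi)
    simp only [huniq, forall_eq, hi, if_false, sum_ite_eq', mem_univ, if_true]
    convert card_signType_filter_exists_neg_one_and_exists_one
      (hA.monotone (Fin.zero_le t₀.succ)) using 4
    exact (Fintype.card_fin n).symm
  · push Not at hex
    simp only [hex, IsEmpty.forall_iff, implies_true, and_true, if_false, sum_const_zero, sub_zero]
    convert card_signType_filter_exists_eq (A 0) _ using 4
    exact (Fintype.card_fin n).symm
end

section
/- Let 𝒮 be an n×n sign pattern and α ⊆ {1,…,n}. Then every matrix W in the sign pattern class Q(𝒮) has α stable (i.e., α is sign stable for 𝒮) if and only if the matrix diag(s_α) · 𝒮 · diag(p_α) is row positive, i.e. entrywise nonnegative with at least one strictly positive entry in each row. Equivalently: for every row i ∈ {1,…,n}, one has (s_α)_i · 𝒮_{ij} ≥ 0 for all j ∈ α, and there exists j ∈ α with 𝒮_{ij} = (s_α)_i. -/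
/-!
Row `i` of the stability condition for `W = W⁺ ∘ 𝒮` reads `0 < ∑_{j ∈ α} W⁺ᵢⱼ · (s_α)ᵢ 𝒮ᵢⱼ`,
a positive combination of the fixed numbers `(s_α)ᵢ 𝒮ᵢⱼ`, and these are exactly the entries of row
`i` of `diag(s_α) 𝒮 diag(p_α)` in the columns of `α`. A positive combination of fixed reals is
positive for all positive weights iff none of them is negative and one is positive: a single
negative term can be made to dominate all the others by giving it a large enough weight.
-/

open Finset

/-- Code of a set: `1` on `α`, `0` off `α`. -/
def code {n : ℕ} (α : Finset (Fin n)) (i : Fin n) : ℝ := if i ∈ α then 1 else 0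

/-- A matrix is row positive if it is entrywise nonnegative with at least one
strictly positive entry in each row. -/
def RowPositive {n : ℕ} (M : Matrix (Fin n) (Fin n) ℝ) : Prop :=
  (∀ i j, 0 ≤ M i j) ∧ ∀ i, ∃ j, 0 < M i j

theorem forall_pos_weights_sum_pos_iff {ι : Type*} (s : Finset ι) (v : ι → ℝ) :
    (∀ w : ι → ℝ, (∀ l, 0 < w l) → 0 < ∑ l ∈ s, w l * v l) ↔
      (∀ l ∈ s, 0 ≤ v l) ∧ ∃ l ∈ s, 0 < v l := by
  classical
  constructor
  · intro h
    refine ⟨fun j hj => ?_, ?_⟩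
    · by_contra! hvj
      obtain ⟨t, ht, htv⟩ : ∃ t : ℝ, 0 ≤ t ∧ t * v j = -|∑ l ∈ s, v l| :=
        ⟨|∑ l ∈ s, v l| / -v j, div_nonneg (abs_nonneg _) (by linarith), by field_simp [hvj.ne]⟩
      have hsum : ∑ l ∈ s, (1 + if l = j then t else 0) * v l =
          ∑ l ∈ s, v l - |∑ l ∈ s, v l| := by
        simp only [add_mul, one_mul, ite_mul, zero_mul, sum_add_distrib, sum_ite_eq', if_pos hj,
          htv]
        ring
      have := h (fun l => 1 + if l = j then t else 0) fun l => by split_ifs <;> linarith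
      linarith [le_abs_self (∑ l ∈ s, v l)]
    · have hpos := h 1 fun _ => one_pos
      simp only [Pi.one_apply, one_mul] at hpos
      by_contra! hnonpos
      exact (sum_nonpos hnonpos).not_gt hpos
  · rintro ⟨hnonneg, j, hj, hvj⟩ w hw
    exact sum_pos' (fun l hl => mul_nonneg (hw l).le (hnonneg l hl)) ⟨j, hj, mul_pos (hw j) hvj⟩

theorem rowPositive_mul_diagonal_code_iff {n : ℕ} (M : Matrix (Fin n) (Fin n) ℝ)
    (α : Finset (Fin n)) :
    RowPositive (M * Matrix.diagonal (code α)) ↔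
      ∀ i, (∀ j ∈ α, 0 ≤ M i j) ∧ ∃ j ∈ α, 0 < M i j := by
  simp only [RowPositive, Matrix.mul_diagonal, code, mul_ite, mul_one, mul_zero]
  constructor
  · rintro ⟨hnonneg, hpos⟩ i
    refine ⟨fun j hj => by simpa [hj] using hnonneg i j, ?_⟩
    obtain ⟨j, hj⟩ := hpos i
    by_cases hjα : j ∈ α
    · exact ⟨j, hjα, by simpa [hjα] using hj⟩
    · simp [hjα] at hj
  · intro h
    refine ⟨fun i j => ?_, fun i => ?_⟩
    · split_ifs with hj
      exacts [(h i).1 j hj, le_rfl]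
    · obtain ⟨j, hj, hpos⟩ := (h i).2
      exact ⟨j, by simpa [hj] using hpos⟩

theorem sgn_mul_sum_mul {n : ℕ} (S : Matrix (Fin n) (Fin n) ℝ) (α : Finset (Fin n)) (i : Fin n)
    (w : Fin n → ℝ) :
    sgn α i * ∑ j ∈ α, w j * S i j = ∑ j ∈ α, w j * (sgn α i * S i j) := by
  rw [mul_sum]
  exact sum_congr rfl fun _ _ => by ring

theorem forall_inSignClass_isStable_iff {n : ℕ} (S : Matrix (Fin n) (Fin n) ℝ)
    (α : Finset (Fin n)) :
    (∀ W, InSignClass W S → IsStable W α) ↔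
      ∀ i, ∀ w : Fin n → ℝ, (∀ l, 0 < w l) → 0 < ∑ j ∈ α, w j * (sgn α i * S i j) := by
  constructor
  · intro h i w hw
    simpa only [sgn_mul_sum_mul] using
      h (fun k l => w l * S k l) ⟨fun _ l => w l, fun _ l => hw l, fun _ _ => rfl⟩ i
  · rintro h W ⟨Wp, hWp, hW⟩ i
    rw [sum_congr rfl fun j _ => hW i j, sgn_mul_sum_mul]
    exact h i (Wp i) (hWp i)

theorem stmt9_general (n : ℕ) (S : Matrix (Fin n) (Fin n) ℝ)
    (α : Finset (Fin n)) :
    (∀ W : Matrix (Fin n) (Fin n) ℝ, InSignClass W S → IsStable W α) ↔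
      RowPositive (Matrix.diagonal (sgn α) * S * Matrix.diagonal (code α)) := by
  rw [forall_inSignClass_isStable_iff, rowPositive_mul_diagonal_code_iff]
  simp only [Matrix.diagonal_mul]
  exact forall_congr' fun i => forall_pos_weights_sum_pos_iff α (fun j => sgn α i * S i j)

/-- `α` is sign stable for the sign pattern `S` (i.e. stable for every `W ∈ Q(S)`)
iff `diag(s_α) · S · diag(p_α)` is row positive. -/
theorem stmt9 (n : ℕ) (S : Matrix (Fin n) (Fin n) ℝ) (hS : IsSignPattern S)
    (α : Finset (Fin n)) :
    (∀ W : Matrix (Fin n) (Fin n) ℝ, InSignClass W S → IsStable W α) ↔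
      RowPositive (Matrix.diagonal (sgn α) * S * Matrix.diagonal (code α)) :=
  stmt9_general n S α
end

section
/- Let 𝒮 be an n×n sign pattern and α ⊆ {1,…,n}. Then every matrix W in the sign pattern class Q(𝒮) makes α minimally stable (that is, α is stable for W and no proper subset β ⊊ α is stable for W) if and only if every matrix W in Q(𝒮) makes α stable (that is, α is sign stable for 𝒮). -/
open Finset

/-- `α` is minimally stable for `W`: stable with no stable proper subset. -/
def IsMinimallyStable {n : ℕ} (W : Matrix (Fin n) (Fin n) ℝ) (α : Finset (Fin n)) : Prop :=
  IsStable W α ∧ ∀ β : Finset (Fin n), β ⊂ α → ¬ IsStable W β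

/-- A set `α` is required to be minimally stable by a sign pattern iff it is
sign stable, i.e. required to be stable. -/
theorem stmt10 (n : ℕ) (S : Matrix (Fin n) (Fin n) ℝ) (hS : IsSignPattern S)
    (α : Finset (Fin n)) :
    (∀ W : Matrix (Fin n) (Fin n) ℝ, InSignClass W S → IsMinimallyStable W α) ↔
      (∀ W : Matrix (Fin n) (Fin n) ℝ, InSignClass W S → IsStable W α) := by
  constructor
  · exact fun h W hW => (h W hW).1
  · intro h W hW
    refine ⟨h W hW, ?_⟩
    intro β hβ hstab
    obtain ⟨i, hiα, hiβ⟩ := Finset.exists_of_ssubset hβ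
    have hneg : ∑ j ∈ β, W i j < 0 := by
      have hi := hstab i
      simp only [sgn, hiβ, if_false] at hi
      linarith
    obtain ⟨Wp, hWp, hWe⟩ := hW
    set A := ∑ j ∈ α \ β, W i j with hA
    set B := ∑ j ∈ β, W i j with hB
    set M : ℝ := max 1 ((A + 1) / (-B)) with hM
    have hM1 : (1 : ℝ) ≤ M := le_max_left _ _
    have hM0 : 0 < M := lt_of_lt_of_le one_pos hM1
    have hM2 : M * B + A < 0 := by
      have h1 : (A + 1) / (-B) ≤ M := le_max_right _ _
      have hBneg : 0 < -B := by linarith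
      have : A + 1 ≤ M * (-B) := by
        calc A + 1 = ((A + 1) / (-B)) * (-B) := (div_mul_cancel₀ _ (ne_of_gt hBneg)).symm
        _ ≤ M * (-B) := by nlinarith
      nlinarith
    set c : Fin n → ℝ := fun j => if j ∈ β then M else 1 with hc
    have hcpos : ∀ j, 0 < c j := by
      intro j; simp only [hc]; split <;> [exact hM0; exact one_pos]
    set W' : Matrix (Fin n) (Fin n) ℝ := fun i j => W i j * c j with hW'
    have hclass : InSignClass W' S := by
      refine ⟨fun i j => Wp i j * c j, fun i j => mul_pos (hWp i j) (hcpos j), ?_⟩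
      intro i j
      simp only [hW', hWe i j]; ring
    have hst := h W' hclass i
    simp only [sgn, hiα, if_true, one_mul, hW'] at hst
    have hsplit : ∑ j ∈ α, W i j * c j = ∑ j ∈ β, W i j * c j + ∑ j ∈ α \ β, W i j * c j := by
      rw [← Finset.sum_sdiff hβ.subset]; ring
    have h1 : ∑ j ∈ β, W i j * c j = M * B := by
      rw [hB, Finset.mul_sum]
      refine Finset.sum_congr rfl fun j hj => ?_
      simp only [hc, if_pos hj]; ring
    have h2 : ∑ j ∈ α \ β, W i j * c j = A := by
      rw [hA]
      refine Finset.sum_congr rfl fun j hj => ?_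
      simp only [hc, if_neg (Finset.mem_sdiff.mp hj).2, mul_one]
    rw [hsplit, h1, h2] at hst
    linarith
end

section
/- Let A be an m×n real matrix and x ∈ ℝ^n a vector with x ≥ 0 entrywise and x ≠ 0. Then A x > 0 entrywise if and only if there exist an entrywise nonnegative n×n matrix X and an entrywise positive m×n matrix Y such that X is invertible, X⁻¹ x ≥ 0 entrywise, and A = Y X⁻¹. -/
/-!
For `⇐`, `A x = Y (X⁻¹ x)` is a positive matrix applied to a nonzero nonnegative vector.
For `⇒`, take `X = ε I + x 1ᵀ` with `ε > 0`: then `X x = (ε + ∑ x) x`, so `X⁻¹ x` is a positive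
multiple of `x`, and `Y = A X = ε A + (A x) 1ᵀ` is positive once `ε` is small, because `A x > 0`.
-/

open Matrix Filter Topology

theorem exists_pos_forall_pos_mul_add {𝕜 ι : Type*} [Field 𝕜] [LinearOrder 𝕜]
    [IsStrictOrderedRing 𝕜] [TopologicalSpace 𝕜] [OrderTopology 𝕜] [Finite ι] (a b : ι → 𝕜)
    (hb : ∀ i, 0 < b i) : ∃ ε > 0, ∀ i, 0 < ε * a i + b i := by
  have hlim (i : ι) : Tendsto (fun ε : 𝕜 => ε * a i + b i) (𝓝[>] 0) (𝓝 (b i)) :=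
    tendsto_nhdsWithin_of_tendsto_nhds <|
      ((continuous_id.mul continuous_const).add continuous_const).tendsto' 0 _ (by simp)
  have hev : ∀ᶠ ε in 𝓝[>] (0 : 𝕜), 0 < ε ∧ ∀ i, 0 < ε * a i + b i :=
    eventually_mem_nhdsWithin.and
      (eventually_all.2 fun i => (hlim i).eventually (eventually_gt_nhds (hb i)))
  obtain ⟨ε, hε, h⟩ := hev.exists
  exact ⟨ε, hε, h⟩

namespace Matrix

section Field

variable {K n : Type*} [Field K] [Fintype n] [DecidableEq n]

theorem isUnit_smul_one_add_vecMulVec {ε : K} (hε : ε ≠ 0) (x y : n → K)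
    (h : ε + y ⬝ᵥ x ≠ 0) : IsUnit (ε • 1 + vecMulVec x y) := by
  have hmul (v : n → K) : (ε • 1 + vecMulVec x y) *ᵥ v = ε • v + (y ⬝ᵥ v) • x := by
    simp [add_mulVec, smul_mulVec, vecMulVec_mulVec]
  rw [← mulVec_injective_iff_isUnit]
  intro v w hvw
  have hzero : ε • (v - w) + (y ⬝ᵥ (v - w)) • x = 0 := by
    rw [← hmul, mulVec_sub, hvw, sub_self]
  have hdot : y ⬝ᵥ (v - w) = 0 := by
    have := congrArg (y ⬝ᵥ ·) hzero
    simp only [dotProduct_add, dotProduct_smul, smul_eq_mul, dotProduct_zero] at this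
    exact (mul_eq_zero.mp (by linear_combination this)).resolve_right h
  rw [hdot, zero_smul, add_zero, smul_eq_zero] at hzero
  exact sub_eq_zero.mp (hzero.resolve_left hε)

theorem inv_mulVec_eq_inv_smul_of_mulVec_eq_smul {X : Matrix n n K} (hX : IsUnit X)
    {x : n → K} {c : K} (h : X *ᵥ x = c • x) : X⁻¹ *ᵥ x = c⁻¹ • x := by
  have hx : x = c • (X⁻¹ *ᵥ x) := by
    rw [← mulVec_smul, ← h, mulVec_mulVec, nonsing_inv_mul _ ((isUnit_iff_isUnit_det X).mp hX),
      one_mulVec]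
  rcases eq_or_ne c 0 with rfl | hc
  · rw [zero_smul] at hx
    simp [hx]
  · conv_rhs => rw [hx, smul_smul, inv_mul_cancel₀ hc, one_smul]

end Field

variable {𝕜 l n : Type*} [Field 𝕜] [LinearOrder 𝕜] [IsStrictOrderedRing 𝕜] [Fintype n]

theorem mulVec_pos_of_pos_of_nonneg {Y : Matrix l n 𝕜} (hY : ∀ i j, 0 < Y i j) {u : n → 𝕜}
    (hu : ∀ j, 0 ≤ u j) (hu0 : u ≠ 0) (i : l) : 0 < (Y *ᵥ u) i := by
  obtain ⟨j, hj⟩ := Function.ne_iff.mp hu0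
  exact Finset.sum_pos' (fun k _ => mul_nonneg (hY i k).le (hu k))
    ⟨j, Finset.mem_univ j, mul_pos (hY i j) ((hu j).lt_of_ne' hj)⟩

theorem mul_inv_mulVec_pos [DecidableEq n] {Y : Matrix l n 𝕜} (hY : ∀ i j, 0 < Y i j)
    {X : Matrix n n 𝕜} (hX : IsUnit X) {x : n → 𝕜} (hXx : ∀ j, 0 ≤ (X⁻¹ *ᵥ x) j) (hx0 : x ≠ 0)
    (i : l) : 0 < ((Y * X⁻¹) *ᵥ x) i := by
  rw [← mulVec_mulVec]
  refine mulVec_pos_of_pos_of_nonneg hY hXx (fun h => hx0 ?_) i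
  rw [← one_mulVec x, ← mul_nonsing_inv X ((isUnit_iff_isUnit_det X).mp hX), ← mulVec_mulVec, h,
    mulVec_zero]

theorem exists_factorization_of_mulVec_pos [TopologicalSpace 𝕜] [OrderTopology 𝕜] [Finite l]
    [DecidableEq n] {A : Matrix l n 𝕜} {x : n → 𝕜} (hx : ∀ j, 0 ≤ x j)
    (hAx : ∀ i, 0 < (A *ᵥ x) i) :
    ∃ (X : Matrix n n 𝕜) (Y : Matrix l n 𝕜), (∀ i j, 0 ≤ X i j) ∧ (∀ i j, 0 < Y i j) ∧
      IsUnit X ∧ (∀ i, 0 ≤ (X⁻¹ *ᵥ x) i) ∧ A = Y * X⁻¹ := by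
  obtain ⟨ε, hε, hεA⟩ := exists_pos_forall_pos_mul_add (fun p : l × n => A p.1 p.2)
    (fun p => (A *ᵥ x) p.1) (fun p => hAx p.1)
  set X : Matrix n n 𝕜 := ε • 1 + vecMulVec x 1
  have hsum : 0 < ε + 1 ⬝ᵥ x := add_pos_of_pos_of_nonneg hε <|
    Finset.sum_nonneg fun j _ => mul_nonneg zero_le_one (hx j)
  have hX : IsUnit X := isUnit_smul_one_add_vecMulVec hε.ne' x 1 hsum.ne'
  have hXx : X *ᵥ x = (ε + 1 ⬝ᵥ x) • x := by
    rw [add_mulVec, smul_mulVec, one_mulVec, vecMulVec_mulVec, op_smul_eq_smul, add_smul]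
  have hAX : A * X = ε • A + vecMulVec (A *ᵥ x) 1 := by
    rw [Matrix.mul_add, Matrix.mul_smul, Matrix.mul_one, mul_vecMulVec]
  refine ⟨X, A * X, fun i j => ?_, fun i j => ?_, hX, fun i => ?_, ?_⟩
  · simp only [X, add_apply, smul_apply, one_apply, vecMulVec_apply, Pi.one_apply, mul_one,
      smul_eq_mul]
    have := hx i
    split_ifs <;> positivity
  · simpa [hAX] using hεA (i, j)
  · rw [inv_mulVec_eq_inv_smul_of_mulVec_eq_smul hX hXx, Pi.smul_apply, smul_eq_mul]
    exact mul_nonneg (inv_nonneg.mpr hsum.le) (hx i)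
  · rw [mul_nonsing_inv_cancel_right _ _ ((isUnit_iff_isUnit_det X).mp hX)]

end Matrix

/-- Factorization lemma for semipositivity: a nonnegative nonzero vector `x` is a
semipositivity vector of `A` (i.e. `A x > 0` entrywise) iff `A = Y X⁻¹` for some
nonnegative invertible `X` having `x` as a seminonnegativity vector of `X⁻¹`, and
some positive `Y`. -/
theorem stmt11 (m n : ℕ) (A : Matrix (Fin m) (Fin n) ℝ) (x : Fin n → ℝ)
    (hx : ∀ i, 0 ≤ x i) (hx0 : x ≠ 0) :
    (∀ i, 0 < (A.mulVec x) i) ↔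
      ∃ (X : Matrix (Fin n) (Fin n) ℝ) (Y : Matrix (Fin m) (Fin n) ℝ),
        (∀ i j, 0 ≤ X i j) ∧ (∀ i j, 0 < Y i j) ∧ IsUnit X ∧
        (∀ i, 0 ≤ (X⁻¹.mulVec x) i) ∧ A = Y * X⁻¹ := by
  refine ⟨exists_factorization_of_mulVec_pos hx, ?_⟩
  rintro ⟨X, Y, -, hY, hX, hXx, rfl⟩
  exact mul_inv_mulVec_pos hY hX hXx hx0
end

section
/- Let W be an n×n real matrix and let α, β ⊆ {1,…,n} be disjoint subsets that are both stable for W, and set γ = α ∪ β. Then γ is stable for W if and only if for every i ∈ α, |Σ_{j∈α} w_{ij}| > |Σ_{j∈β} w_{ij}|, and for every i ∈ β, |Σ_{j∈β} w_{ij}| > |Σ_{j∈α} w_{ij}| (i.e., the submatrix W[γ] is strictly α-block diagonally dominant). -/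
open Finset

/-- Composition: if `α` and `β` are disjoint stable sets, then `γ = α ∪ β` is stable
iff `W[γ]` is strictly `α`-block diagonally dominant. -/
theorem stmt14 (n : ℕ) (W : Matrix (Fin n) (Fin n) ℝ) (α β : Finset (Fin n))
    (hdisj : Disjoint α β) (hα : IsStable W α) (hβ : IsStable W β) :
    IsStable W (α ∪ β) ↔
      ((∀ i ∈ α, |∑ j ∈ β, W i j| < |∑ j ∈ α, W i j|) ∧
        ∀ i ∈ β, |∑ j ∈ α, W i j| < |∑ j ∈ β, W i j|) := by
  constructor
  · intro h
    constructor
    · intro i hi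
      have hiβ : i ∉ β := Finset.disjoint_left.mp hdisj hi
      have h1 := hα i; have h2 := hβ i; have h3 := h i
      rw [sgn, if_pos hi, one_mul] at h1
      rw [sgn, if_neg hiβ, neg_one_mul] at h2
      rw [sgn, if_pos (Finset.mem_union_left β hi), one_mul,
        Finset.sum_union hdisj] at h3
      rw [abs_of_neg (by linarith), abs_of_pos h1]
      linarith
    · intro i hi
      have hiα : i ∉ α := Finset.disjoint_right.mp hdisj hi
      have h1 := hα i; have h2 := hβ i; have h3 := h i
      rw [sgn, if_neg hiα, neg_one_mul] at h1
      rw [sgn, if_pos hi, one_mul] at h2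
      rw [sgn, if_pos (Finset.mem_union_right α hi), one_mul,
        Finset.sum_union hdisj] at h3
      rw [abs_of_neg (by linarith), abs_of_pos h2]
      linarith
  · rintro ⟨hA, hB⟩ i
    have h1 := hα i; have h2 := hβ i
    by_cases hiα : i ∈ α
    · have hiβ : i ∉ β := Finset.disjoint_left.mp hdisj hiα
      have hd := hA i hiα
      rw [sgn, if_pos hiα, one_mul] at h1
      rw [sgn, if_neg hiβ, neg_one_mul] at h2
      rw [abs_of_neg (by linarith), abs_of_pos h1] at hd
      rw [sgn, if_pos (Finset.mem_union_left β hiα), one_mul,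
        Finset.sum_union hdisj]
      linarith
    · by_cases hiβ : i ∈ β
      · have hd := hB i hiβ
        rw [sgn, if_neg hiα, neg_one_mul] at h1
        rw [sgn, if_pos hiβ, one_mul] at h2
        rw [abs_of_neg (by linarith), abs_of_pos h2] at hd
        rw [sgn, if_pos (Finset.mem_union_right α hiβ), one_mul,
          Finset.sum_union hdisj]
        linarith
      · rw [sgn, if_neg hiα, neg_one_mul] at h1
        rw [sgn, if_neg hiβ, neg_one_mul] at h2
        rw [sgn, if_neg (by simp [hiα, hiβ]), neg_one_mul,
          Finset.sum_union hdisj]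
        linarith
end

section
/- Let W be an n×n real matrix, let γ ⊆ {1,…,n} be stable for W, and let α, β be disjoint subsets with α ∪ β = γ. Then both α and β are stable for W if and only if (i) Σ_{j∈β} w_{ij} < 0 for every i ∈ α and Σ_{j∈α} w_{ij} < 0 for every i ∈ β (i.e., W[γ] is a strict α-block Z-matrix), and (ii) (Σ_{j∈α} w_{ij}) · (Σ_{j∈β} w_{ij}) > 0 for every i ∉ γ. -/
open Finset

/-- Decomposition: if `γ` is stable and `α, β` are disjoint with `α ∪ β = γ`, then
`α` and `β` are both stable iff `W[γ]` is a strict `α`-block `Z`-matrix and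
`(Σ_{j∈α} w_{ij})(Σ_{j∈β} w_{ij}) > 0` for every `i ∉ γ`. -/
theorem stmt15 (n : ℕ) (W : Matrix (Fin n) (Fin n) ℝ) (α β γ : Finset (Fin n))
    (hdisj : Disjoint α β) (hγ : α ∪ β = γ) (hstab : IsStable W γ) :
    (IsStable W α ∧ IsStable W β) ↔
      ((∀ i ∈ α, ∑ j ∈ β, W i j < 0) ∧ (∀ i ∈ β, ∑ j ∈ α, W i j < 0) ∧
        ∀ i ∉ γ, 0 < (∑ j ∈ α, W i j) * (∑ j ∈ β, W i j)) := by
  subst hγ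
  have hsum : ∀ i, ∑ j ∈ α ∪ β, W i j = (∑ j ∈ α, W i j) + ∑ j ∈ β, W i j :=
    fun i => Finset.sum_union hdisj
  constructor
  · rintro ⟨ha, hb⟩
    refine ⟨fun i hi => ?_, fun i hi => ?_, fun i hi => ?_⟩
    · have h := hb i
      have : i ∉ β := Finset.disjoint_left.mp hdisj hi
      simp [sgn, this] at h; linarith
    · have h := ha i
      have : i ∉ α := Finset.disjoint_right.mp hdisj hi
      simp [sgn, this] at h; linarith
    · simp only [Finset.mem_union, not_or] at hi
      have h1 := ha i; have h2 := hb i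
      simp [sgn, hi.1, hi.2] at h1 h2
      nlinarith
  · rintro ⟨h1, h2, h3⟩
    have key : ∀ i, (0 < sgn α i * ∑ j ∈ α, W i j) ∧ (0 < sgn β i * ∑ j ∈ β, W i j) := by
      intro i
      have hs := hstab i
      rw [hsum i] at hs
      by_cases hiα : i ∈ α
      · have hiβ : i ∉ β := Finset.disjoint_left.mp hdisj hiα
        have hβneg := h1 i hiα
        simp [sgn, hiα, hiβ, Finset.mem_union] at hs ⊢
        constructor <;> linarith
      · by_cases hiβ : i ∈ β
        · have hαneg := h2 i hiβ
          simp [sgn, hiα, hiβ, Finset.mem_union] at hs ⊢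
          constructor <;> linarith
        · have hprod := h3 i (by simp [Finset.mem_union, hiα, hiβ])
          simp [sgn, hiα, hiβ, Finset.mem_union] at hs ⊢
          constructor <;> nlinarith [sq_nonneg (∑ j ∈ α, W i j), sq_nonneg (∑ j ∈ β, W i j)]
    exact ⟨fun i => (key i).1, fun i => (key i).2⟩
end
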